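/- (Uhlmann, majorization direction) Let Γ, Γ' be density operators on a D-dimensional Hilbert space. If Γ' = Σ_i p_i U_i Γ U_i† for some unitaries U_i and weights p_i ≥ 0 with Σ_i p_i = 1, then the spectrum of Γ' is majorized by the spectrum of Γ. -/

import Mathlib

open scoped ComplexOrder

/-- The vector `v` with entries sorted in decreasing order. -/
noncomputable def sortDesc {d : ℕ} (v : Fin d → ℝ) : Fin d → ℝ :=
  fun i => v (Tuple.sort (fun j => -v j) i)

/-- Sum of the `k` largest entries of `v`. -/
noncomputable def psum {d : ℕ} (v : Fin d → ℝ) (k : ℕ) : ℝ :=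
  ∑ i ∈ Finset.univ.filter (fun i : Fin d => (i : ℕ) < k), sortDesc v i

/-- `v ≺ w` : `v` is majorized by `w`. -/
def Majorizes {d : ℕ} (v w : Fin d → ℝ) : Prop :=
  (∀ k : ℕ, k ≤ d → psum v k ≤ psum w k) ∧ ∑ i, v i = ∑ i, w i

/-!
Diagonalize `Γ = V diag(λ) V†` and `Γ' = W diag(λ') W†`. Reading off the diagonal of `W† Γ' W`
gives `λ' = B λ` with `B j t = ∑ i, p i * |(W† U i V) j t|²`. The squared moduli of the entries of
a unitary form a doubly stochastic matrix, and so does their convex combination `B`. Finally any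
doubly stochastic `B` gives `B λ ≺ λ`: sorting both vectors keeps `B` doubly stochastic, and the
sum of the `k` largest entries of `B λ` is `∑ t, c t * λ t` with weights `c t ∈ [0, 1]` summing to
`k`, which is at most the sum of the `k` largest `λ t`.
-/

open Finset Matrix

section Majorization

variable {d : ℕ}

lemma sortDesc_antitone (v : Fin d → ℝ) : Antitone (sortDesc v) := fun _ _ hij => by
  simpa [sortDesc] using Tuple.monotone_sort (fun j => -v j) hij

lemma sum_mul_le_sum_filter_val_lt_of_antitone {k : ℕ} (hk : k ≤ d) {μ c : Fin d → ℝ}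
    (hμ : Antitone μ) (hc₀ : ∀ i, 0 ≤ c i) (hc₁ : ∀ i, c i ≤ 1) (hc : ∑ i, c i = k) :
    ∑ i, c i * μ i ≤ ∑ i ∈ univ.filter (fun i : Fin d => (i : ℕ) < k), μ i := by
  obtain ⟨τ, hτ_le, hle_τ⟩ : ∃ τ, (∀ i : Fin d, (i : ℕ) < k → τ ≤ μ i) ∧
      ∀ i : Fin d, k ≤ (i : ℕ) → μ i ≤ τ := by
    by_cases hkd : k < d
    · exact ⟨μ ⟨k, hkd⟩, fun i hi => hμ (Fin.mk_le_of_le_val hi.le),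
        fun i hi => hμ (Fin.le_def.mpr hi)⟩
    · obtain ⟨τ, hτ⟩ := (Set.finite_range μ).bddBelow
      exact ⟨τ, fun i _ => hτ ⟨i, rfl⟩, fun i hi => absurd i.2 (by omega)⟩
  set χ : Fin d → ℝ := fun i => if (i : ℕ) < k then 1 else 0
  have hχ : ∑ i, χ i = k := by
    simp [χ, Fin.card_filter_val_lt, hk]
  -- `(c i - χ i) * (μ i - τ) ≤ 0`: `c - χ` is `≤ 0` where `μ ≥ τ` and `≥ 0` where `μ ≤ τ`.
  have hpt : ∀ i, c i * μ i ≤ χ i * μ i + (c i - χ i) * τ := by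
    intro i
    by_cases hi : (i : ℕ) < k
    · simp only [χ, hi, if_true]; nlinarith [hc₁ i, hτ_le i hi]
    · simp only [χ, hi, if_false]; nlinarith [hc₀ i, hle_τ i (by omega)]
  calc ∑ i, c i * μ i ≤ ∑ i, (χ i * μ i + (c i - χ i) * τ) := sum_le_sum fun i _ => hpt i
    _ = ∑ i ∈ univ.filter (fun i : Fin d => (i : ℕ) < k), μ i + (∑ i, c i - ∑ i, χ i) * τ := by
      rw [sum_add_distrib, ← sum_mul, sum_sub_distrib, sum_filter]
      simp only [χ, ite_mul, one_mul, zero_mul]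
    _ = ∑ i ∈ univ.filter (fun i : Fin d => (i : ℕ) < k), μ i := by rw [hc, hχ]; ring

lemma sum_filter_val_lt_mulVec_le_of_antitone {B : Matrix (Fin d) (Fin d) ℝ}
    (hB : B ∈ doublyStochastic ℝ (Fin d)) {w : Fin d → ℝ} (hw : Antitone w) {k : ℕ}
    (hk : k ≤ d) :
    ∑ i ∈ univ.filter (fun i : Fin d => (i : ℕ) < k), (B *ᵥ w) i
      ≤ ∑ i ∈ univ.filter (fun i : Fin d => (i : ℕ) < k), w i := by
  set S := univ.filter fun i : Fin d => (i : ℕ) < k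
  have hS : ∑ i ∈ S, (B *ᵥ w) i = ∑ t, (∑ i ∈ S, B i t) * w t := by
    simp only [mulVec, dotProduct, sum_mul]
    exact sum_comm
  rw [hS]
  refine sum_mul_le_sum_filter_val_lt_of_antitone hk hw
    (fun t => sum_nonneg fun i _ => nonneg_of_mem_doublyStochastic hB) (fun t => ?_) ?_
  · calc ∑ i ∈ S, B i t ≤ ∑ i, B i t :=
          sum_le_sum_of_subset_of_nonneg (subset_univ S)
            fun _ _ _ => nonneg_of_mem_doublyStochastic hB
      _ = 1 := sum_col_of_mem_doublyStochastic hB t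
  · rw [sum_comm, sum_congr rfl fun i _ => sum_row_of_mem_doublyStochastic hB i]
    simp [S, Fin.card_filter_val_lt, hk]

lemma exists_mem_doublyStochastic_sortDesc_mulVec {B : Matrix (Fin d) (Fin d) ℝ}
    (hB : B ∈ doublyStochastic ℝ (Fin d)) (w : Fin d → ℝ) :
    ∃ B' ∈ doublyStochastic ℝ (Fin d), sortDesc (B *ᵥ w) = B' *ᵥ sortDesc w := by
  set σ := Tuple.sort fun j => -(B *ᵥ w) j
  set π := Tuple.sort fun j => -w j
  refine ⟨B.reindex σ.symm π.symm, reindex_mem_doublyStochastic hB, funext fun i => ?_⟩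
  simp only [sortDesc, mulVec, dotProduct, reindex_apply, submatrix_apply, Equiv.symm_symm]
  exact (Equiv.sum_comp π _).symm

theorem majorizes_mulVec_of_mem_doublyStochastic {B : Matrix (Fin d) (Fin d) ℝ}
    (hB : B ∈ doublyStochastic ℝ (Fin d)) (w : Fin d → ℝ) : Majorizes (B *ᵥ w) w := by
  refine ⟨fun k hk => ?_, sum_mulVec_of_mem_doublyStochastic hB⟩
  obtain ⟨B', hB', hsort⟩ := exists_mem_doublyStochastic_sortDesc_mulVec hB w
  rw [psum, psum, hsort]
  exact sum_filter_val_lt_mulVec_le_of_antitone hB' (sortDesc_antitone w) hk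

end Majorization

section Unitary

variable {𝕜 : Type*} [RCLike 𝕜] {n : Type*} [Fintype n] [DecidableEq n]

theorem Matrix.map_norm_sq_mem_doublyStochastic {U : Matrix n n 𝕜}
    (hU : U ∈ unitaryGroup n 𝕜) : U.map (‖·‖ ^ 2) ∈ doublyStochastic ℝ n := by
  have hrow : ∀ i, ∑ j, ((‖U i j‖ ^ 2 : ℝ) : 𝕜) = 1 := fun i => by
    simpa [mul_apply, star_apply, RCLike.mul_conj] using
      congr_fun₂ (mem_unitaryGroup_iff.mp hU) i i
  have hcol : ∀ j, ∑ i, ((‖U i j‖ ^ 2 : ℝ) : 𝕜) = 1 := fun j => by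
    simpa [mul_apply, star_apply, RCLike.conj_mul] using
      congr_fun₂ (mem_unitaryGroup_iff'.mp hU) j j
  refine mem_doublyStochastic_iff_sum.mpr ⟨fun _ _ => sq_nonneg _, fun i => ?_, fun j => ?_⟩
  · exact_mod_cast hrow i
  · exact_mod_cast hcol j

theorem Matrix.mul_diagonal_mul_star_apply_self (M : Matrix n n 𝕜) (v : n → ℝ) (j : n) :
    (M * diagonal (RCLike.ofReal ∘ v) * star M : Matrix n n 𝕜) j j
      = ((M.map (‖·‖ ^ 2) *ᵥ v) j : 𝕜) := by
  rw [mul_apply, mulVec, dotProduct, RCLike.ofReal_sum]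
  refine sum_congr rfl fun t _ => ?_
  simp only [mul_diagonal, star_apply, map_apply, Function.comp_apply, RCLike.ofReal_mul,
    RCLike.ofReal_pow, RCLike.star_def, ← RCLike.mul_conj]
  ring

theorem Matrix.IsHermitian.mul_mul_star_apply_self {A : Matrix n n 𝕜} (hA : A.IsHermitian)
    (V : Matrix n n 𝕜) (j : n) :
    (V * A * star V) j j
      = (((V * hA.eigenvectorUnitary).map (‖·‖ ^ 2) *ᵥ hA.eigenvalues) j : 𝕜) := by
  conv_lhs => rw [hA.spectral_theorem, Unitary.conjStarAlgAut_apply]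
  rw [← mul_diagonal_mul_star_apply_self, star_mul]
  simp only [Matrix.mul_assoc]

theorem Matrix.IsHermitian.eigenvalues_eq_star_mul_mul_apply_self {A : Matrix n n 𝕜}
    (hA : A.IsHermitian) (j : n) :
    (hA.eigenvalues j : 𝕜)
      = (star (hA.eigenvectorUnitary : Matrix n n 𝕜) * A * hA.eigenvectorUnitary) j j := by
  rw [← Unitary.conjStarAlgAut_star_apply (S := 𝕜), hA.conjStarAlgAut_star_eigenvectorUnitary]
  simp

theorem Matrix.IsHermitian.eigenvalues_eq_mulVec_of_eq_sum_smul_conj {ι : Type*} [Fintype ι]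
    {A A' : Matrix n n 𝕜} (hA : A.IsHermitian) (hA' : A'.IsHermitian) (p : ι → ℝ)
    (U : ι → Matrix n n 𝕜) (h : A' = ∑ i, p i • (U i * A * (U i)ᴴ)) :
    hA'.eigenvalues = (∑ i, p i • (star (hA'.eigenvectorUnitary : Matrix n n 𝕜) * U i *
      hA.eigenvectorUnitary).map (‖·‖ ^ 2)) *ᵥ hA.eigenvalues := by
  subst h
  funext j
  apply RCLike.ofReal_injective (K := 𝕜)
  rw [hA'.eigenvalues_eq_star_mul_mul_apply_self]
  simp only [Matrix.mul_sum, Matrix.sum_mul, sum_apply, Matrix.mul_smul, Matrix.smul_mul,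
    smul_apply, sum_mulVec, smul_mulVec, Finset.sum_apply, Pi.smul_apply, smul_eq_mul,
    RCLike.ofReal_sum, RCLike.ofReal_mul, RCLike.real_smul_eq_coe_mul]
  refine sum_congr rfl fun i _ => ?_
  rw [← hA.mul_mul_star_apply_self]
  simp only [star_mul, Matrix.mul_assoc, star_eq_conjTranspose, conjTranspose_conjTranspose]

end Unitary

theorem uhlmann_majorization_general {D n : ℕ}
    (Γ Γ' : Matrix (Fin D) (Fin D) ℂ)
    (hΓ : Γ.PosSemidef)
    (hΓ' : Γ'.PosSemidef)
    (U : Fin n → Matrix (Fin D) (Fin D) ℂ)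
    (hU : ∀ i, U i ∈ Matrix.unitaryGroup (Fin D) ℂ)
    (p : Fin n → ℝ) (hp : ∀ i, 0 ≤ p i) (hpsum : ∑ i, p i = 1)
    (hmix : Γ' = ∑ i, (p i : ℂ) • (U i * Γ * (U i).conjTranspose)) :
    Majorizes hΓ'.1.eigenvalues hΓ.1.eigenvalues := by
  have hmix' : Γ' = ∑ i, p i • (U i * Γ * (U i)ᴴ) := by
    rw [hmix]
    exact sum_congr rfl fun i _ => algebraMap_smul ℂ (p i) _
  rw [hΓ.1.eigenvalues_eq_mulVec_of_eq_sum_smul_conj hΓ'.1 p U hmix']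
  refine majorizes_mulVec_of_mem_doublyStochastic
    (convex_doublyStochastic.sum_mem (fun i _ => hp i) hpsum fun i _ => ?_) _
  exact map_norm_sq_mem_doublyStochastic <| mul_mem (mul_mem
    (Unitary.star_mem hΓ'.1.eigenvectorUnitary.2) (hU i)) hΓ.1.eigenvectorUnitary.2

/-- Uhlmann's theorem (majorization direction): if `Γ' = ∑ i, p i • U i Γ (U i)†`
with `U i` unitary and `p` a probability vector, then `spec(Γ') ≺ spec(Γ)`. -/
theorem uhlmann_majorization {D n : ℕ}
    (Γ Γ' : Matrix (Fin D) (Fin D) ℂ)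
    (hΓ : Γ.PosSemidef) (hΓtr : Γ.trace = 1)
    (hΓ' : Γ'.PosSemidef) (hΓ'tr : Γ'.trace = 1)
    (U : Fin n → Matrix (Fin D) (Fin D) ℂ)
    (hU : ∀ i, U i ∈ Matrix.unitaryGroup (Fin D) ℂ)
    (p : Fin n → ℝ) (hp : ∀ i, 0 ≤ p i) (hpsum : ∑ i, p i = 1)
    (hmix : Γ' = ∑ i, (p i : ℂ) • (U i * Γ * (U i).conjTranspose)) :
    Majorizes hΓ'.1.eigenvalues hΓ.1.eigenvalues :=
  uhlmann_majorization_general Γ Γ' hΓ hΓ' U hU p hp hpsum hmix
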